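/- Let n ≥ 2 and let μ₀ ∈ ℝⁿ satisfy ⟨μ₀, α⟩ ≥ 0 and ⟨(ρ_nc − ρ_c) − μ₀, α⟩ ≥ 0 for every α ∈ Δ⁺_c. Then there exist real numbers a and b with b ≤ a ≤ b + 1 such that μ₀ = a·Σ_{1 ≤ i ≤ n, i odd} e_i + b·Σ_{1 ≤ i ≤ n, i even} e_i (i.e. every odd coordinate of μ₀ equals a and every even coordinate equals b). -/
import Mathlib


/-- The `i`-th standard basis vector of `ℝⁿ` (`0`-indexed; zero if `i ≥ n`). -/
def stdv (n i : ℕ) : Fin n → ℝ := fun k => if (k : ℕ) = i then 1 else 0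

/-- The standard inner product on `ℝⁿ`. -/
noncomputable def dotp {n : ℕ} (x y : Fin n → ℝ) : ℝ := ∑ k, x k * y k

/-- The compact positive roots of `Sp(2n,ℂ)` (`0`-based):
`Δ⁺_c = {(-1)^i (e_i - e_j) : i < j < n}`. -/
def spDeltaC (n : ℕ) : Set (Fin n → ℝ) :=
  {x | ∃ i j : ℕ, i < j ∧ j < n ∧ x = (-1 : ℝ) ^ i • (stdv n i - stdv n j)}

/-- `ρ_nc - ρ_c = ∑_{i < n, i even} e_i` for `Sp(2n,ℂ)` (`0`-based, so "even" corresponds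
to the paper's `1`-based odd indices). -/
noncomputable def spRhoDiff (n : ℕ) : Fin n → ℝ :=
  ∑ i ∈ (Finset.range n).filter (fun i => i % 2 = 0), stdv n i


lemma dotp_stdv {n : ℕ} (x : Fin n → ℝ) (i : ℕ) (hi : i < n) :
    dotp x (stdv n i) = x ⟨i, hi⟩ := by
  unfold dotp stdv
  rw [Finset.sum_eq_single (⟨i, hi⟩ : Fin n)]
  · simp
  · intro b _ hb
    have : (b : ℕ) ≠ i := fun h => hb (Fin.ext h)
    simp [this]
  · simp

lemma dotp_root {n : ℕ} (x : Fin n → ℝ) (i j : ℕ) (hij : i < j) (hj : j < n) :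
    dotp x ((-1 : ℝ) ^ i • (stdv n i - stdv n j)) =
      (-1 : ℝ) ^ i * (x ⟨i, hij.trans hj⟩ - x ⟨j, hj⟩) := by
  rw [← dotp_stdv x i (hij.trans hj), ← dotp_stdv x j hj]
  unfold dotp
  rw [← Finset.sum_sub_distrib, Finset.mul_sum]
  exact Finset.sum_congr rfl fun k _ => by simp; ring

lemma stdv_sum_apply (n : ℕ) (P : ℕ → Prop) [DecidablePred P] (k : Fin n) :
    (∑ i ∈ (Finset.range n).filter P, stdv n i) k = if P (k : ℕ) then 1 else 0 := by
  simp only [Finset.sum_apply, stdv]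
  rw [Finset.sum_ite_eq]
  simp [k.isLt]

lemma spRhoDiff_apply {n : ℕ} (k : Fin n) :
    spRhoDiff n k = if (k : ℕ) % 2 = 0 then 1 else 0 :=
  stdv_sum_apply n _ k

/-- **Key step for `Sp(2n,ℂ)`:** if `μ₀ ∈ ℝⁿ` satisfies `⟨μ₀, α⟩ ≥ 0` and
`⟨(ρ_nc - ρ_c) - μ₀, α⟩ ≥ 0` for all compact positive roots `α`, then there are reals
`b ≤ a ≤ b + 1` such that every even-indexed coordinate of `μ₀` is `a` and every
odd-indexed coordinate is `b`, i.e.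
`μ₀ = a·∑_{i even} e_i + b·∑_{i odd} e_i`. -/
theorem sp_weight_coords_of_nonneg_pairing (n : ℕ) (hn : 2 ≤ n)
    (μ₀ : Fin n → ℝ)
    (h1 : ∀ α ∈ spDeltaC n, 0 ≤ dotp μ₀ α)
    (h2 : ∀ α ∈ spDeltaC n, 0 ≤ dotp (spRhoDiff n - μ₀) α) :
    ∃ a b : ℝ, b ≤ a ∧ a ≤ b + 1 ∧
      μ₀ = a • (∑ i ∈ (Finset.range n).filter (fun i => i % 2 = 0), stdv n i) +
        b • (∑ i ∈ (Finset.range n).filter (fun i => i % 2 = 1), stdv n i) := by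
  have h0 : 0 < n := by omega
  have h1n : 1 < n := by omega
  have key : ∀ i j : ℕ, (hij : i < j) → (hj : j < n) →
      0 ≤ (-1 : ℝ) ^ i * (μ₀ ⟨i, hij.trans hj⟩ - μ₀ ⟨j, hj⟩) ∧
      0 ≤ (-1 : ℝ) ^ i * ((spRhoDiff n - μ₀) ⟨i, hij.trans hj⟩ -
        (spRhoDiff n - μ₀) ⟨j, hj⟩) := by
    intro i j hij hj
    have hmem : (-1 : ℝ) ^ i • (stdv n i - stdv n j) ∈ spDeltaC n :=
      ⟨i, j, hij, hj, rfl⟩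
    constructor
    · have := h1 _ hmem; rwa [dotp_root μ₀ i j hij hj] at this
    · have := h2 _ hmem; rwa [dotp_root _ i j hij hj] at this
  set a := μ₀ ⟨0, h0⟩ with ha
  set b := μ₀ ⟨1, h1n⟩ with hb
  have hab : b ≤ a ∧ a ≤ b + 1 := by
    obtain ⟨hA, hB⟩ := key 0 1 one_pos h1n
    simp only [Pi.sub_apply, spRhoDiff_apply, pow_zero, one_mul] at hA hB
    norm_num at hB
    constructor <;> linarith
  -- every even coord is a, every odd coord is b
  have hcoord : ∀ k : Fin n, μ₀ k = if (k : ℕ) % 2 = 0 then a else b := by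
    intro k
    rcases Nat.even_or_odd (k : ℕ) with he | ho
    · have hk2 : (k : ℕ) % 2 = 0 := Nat.even_iff.mp he
      rw [if_pos hk2]
      rcases Nat.eq_zero_or_pos (k : ℕ) with h | h
      · have : k = ⟨0, h0⟩ := Fin.ext h
        rw [this]
      · have hik : 0 < (k : ℕ) := h
        obtain ⟨hA, hB⟩ := key 0 k hik k.isLt
        simp only [Pi.sub_apply, spRhoDiff_apply, pow_zero, one_mul, hk2] at hA hB
        have hkk : (⟨(k : ℕ), k.isLt⟩ : Fin n) = k := rfl
        rw [hkk] at hA hB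
        norm_num at hB
        linarith
    · have hk2 : (k : ℕ) % 2 = 1 := Nat.odd_iff.mp ho
      rw [if_neg (by omega)]
      rcases eq_or_lt_of_le (show 1 ≤ (k : ℕ) by omega) with h | h
      · have : k = ⟨1, h1n⟩ := Fin.ext h.symm
        rw [this]
      · obtain ⟨hA, hB⟩ := key 1 k h k.isLt
        simp only [Pi.sub_apply, spRhoDiff_apply, pow_one, hk2] at hA hB
        have hkk : (⟨(k : ℕ), k.isLt⟩ : Fin n) = k := rfl
        rw [hkk] at hA hB
        norm_num at hA hB
        linarith
  refine ⟨a, b, hab.1, hab.2, ?_⟩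
  funext k
  have := hcoord k
  simp only [Pi.add_apply, Pi.smul_apply, smul_eq_mul,
    stdv_sum_apply n (fun i => i % 2 = 0) k, stdv_sum_apply n (fun i => i % 2 = 1) k]
  rcases Nat.even_or_odd (k : ℕ) with he | ho
  · have hk2 : (k : ℕ) % 2 = 0 := Nat.even_iff.mp he
    simp [hk2] at this ⊢; exact this
  · have hk2 : (k : ℕ) % 2 = 1 := Nat.odd_iff.mp ho
    simp [hk2] at this ⊢; exact this
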